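/- There exists ε₀ > 0 such that for every 0 < ε < ε₀ and every x ∈ [−x_ε, x_ε] one has u_ε(x, 1+h) < −h²/2 and u_ε(x, −(1+h)) < −h²/2; in particular u_ε is strictly negative on the two horizontal sides of the rectangle R_ε. -/

import Mathlib

/-!
On the lines `y = ±(1 + h)` one has `1/2 - y²/2 = -h - h²/2`, so it suffices that the
perturbation `ε (y³ - 3x²y) + ε^{3/2} v` stay below `h`. For `|x| ≤ x_ε` the cubic term is
`O(ε + ε x_ε²) = O(ε^{1 - 3/(2k)})`, which tends to `0` because `k ≥ 2`. The term `ε^{3/2} v`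
is not small near `x = ±x_ε`, but `v` is bounded above on the strip `|y| ≤ 2`: far from the
roots every factor `x - xᵢ + iy` of `F` is nearly real with the same sign, and since there is an
even number of them, `Re F ≤ 0` there.
-/

open Set Filter Topology

/-- The holomorphic function `F(z) = -∏ (z - xᵢ)`. -/
noncomputable def FF (k : ℕ) (x : Fin (2*k) → ℝ) (z : ℂ) : ℂ :=
  -∏ i, (z - (x i : ℂ))

/-- `v(x,y) = Re F(x + iy)`, a harmonic function. -/
noncomputable def vv (k : ℕ) (x : Fin (2*k) → ℝ) (p : ℝ × ℝ) : ℝ :=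
  (FF k x ((p.1 : ℂ) + (p.2 : ℂ) * Complex.I)).re

/-- The restriction `f` of `F` to the real line. -/
noncomputable def ff (k : ℕ) (x : Fin (2*k) → ℝ) (t : ℝ) : ℝ :=
  (FF k x (t : ℂ)).re

/-- `u_ε(x,y) = 1/2 - y²/2 + ε (y³ - 3 x² y) + ε^{3/2} v(x,y)`. -/
noncomputable def uu (k : ℕ) (x : Fin (2*k) → ℝ) (ε : ℝ) (p : ℝ × ℝ) : ℝ :=
  1/2 - p.2^2/2 + ε * (p.2^3 - 3*p.1^2*p.2) + ε ^ ((3:ℝ)/2) * vv k x p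

/-- `x_ε = (3 ε^{-3/2})^{1/(2k)}`. -/
noncomputable def xeps (k : ℕ) (ε : ℝ) : ℝ :=
  (3 * ε ^ (-(3:ℝ)/2)) ^ ((1:ℝ)/(2*k))

/-- `Ω_ε`: the connected component of `{u_ε > 0}` containing `(x₁, 0)`. -/
noncomputable def Omeg (k : ℕ) (hk : 2 ≤ k) (x : Fin (2*k) → ℝ) (ε : ℝ) : Set (ℝ × ℝ) :=
  connectedComponentIn {p : ℝ × ℝ | 0 < uu k x ε p} (x ⟨0, by omega⟩, 0)

/-- partial derivative in the first variable. -/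
noncomputable def px (g : ℝ × ℝ → ℝ) (p : ℝ × ℝ) : ℝ :=
  deriv (fun t => g (t, p.2)) p.1

/-- partial derivative in the second variable. -/
noncomputable def py (g : ℝ × ℝ → ℝ) (p : ℝ × ℝ) : ℝ :=
  deriv (fun t => g (p.1, t)) p.2

/-- `N_u = u_xx u_y² - 2 u_xy u_x u_y + u_yy u_x²`. -/
noncomputable def NN (g : ℝ × ℝ → ℝ) (p : ℝ × ℝ) : ℝ :=
  px (px g) p * (py g p)^2 - 2 * py (px g) p * px g p * py g p + py (py g) p * (px g p)^2

/-- Oriented curvature of a level curve of `g`. -/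
noncomputable def CurvU (g : ℝ × ℝ → ℝ) (p : ℝ × ℝ) : ℝ :=
  -(NN g p) / ((px g p)^2 + (py g p)^2) ^ ((3:ℝ)/2)

open Complex in
lemma re_prod_one_add_nonneg {ι : Type*} (s : Finset ι) (w : ι → ℂ)
    (hw : ∑ i ∈ s, ‖w i‖ ≤ Real.log 2) : 0 ≤ (∏ i ∈ s, (1 + w i)).re := by
  have hdev : ‖∏ i ∈ s, (1 + w i) - 1‖ ≤ 1 := by
    refine (s.norm_prod_one_add_sub_one_le w).trans ?_
    have := Real.exp_le_exp.mpr hw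
    rw [Real.exp_log two_pos] at this
    linarith
  have hre := (abs_le.mp ((abs_re_le_norm _).trans hdev)).1
  rw [sub_re, one_re] at hre
  linarith

open Complex in
lemma re_prod_add_mul_I_nonneg {ι : Type*} [Fintype ι] (t : ι → ℝ) (y : ℝ)
    (hprod : 0 ≤ ∏ i, t i) (ht : ∀ i, 2 * Fintype.card ι * |y| ≤ |t i|) :
    0 ≤ (∏ i, ((t i : ℂ) + y * I)).re := by
  rcases eq_or_ne y 0 with rfl | hy
  · simpa [← ofReal_prod] using hprod
  have ht0 : ∀ i, t i ≠ 0 := fun i hti => by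
    have : 0 < (Fintype.card ι : ℝ) := Nat.cast_pos.mpr (Fintype.card_pos_iff.mpr ⟨i⟩)
    have := ht i
    simp only [hti, abs_zero] at this
    nlinarith [abs_pos.mpr hy]
  have hfac : ∀ i, (t i : ℂ) + y * I = t i * (1 + ((y / t i : ℝ) : ℂ) * I) := fun i => by
    have : (t i : ℂ) ≠ 0 := ofReal_ne_zero.mpr (ht0 i)
    push_cast
    field_simp
  simp_rw [hfac, Finset.prod_mul_distrib, ← ofReal_prod, re_ofReal_mul]
  refine mul_nonneg hprod (re_prod_one_add_nonneg _ _ ?_)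
  calc ∑ i, ‖((y / t i : ℝ) : ℂ) * I‖
      ≤ ∑ _i : ι, (1 : ℝ) / (2 * Fintype.card ι) := Finset.sum_le_sum fun i _ => by
        have hn : (0 : ℝ) < Fintype.card ι := Nat.cast_pos.mpr (Fintype.card_pos_iff.mpr ⟨i⟩)
        rw [norm_mul, norm_I, mul_one, norm_real, Real.norm_eq_abs, abs_div,
          div_le_div_iff₀ (abs_pos.mpr (ht0 i)) (by positivity)]
        linarith [ht i]
    _ ≤ 1 / 2 := by
        rw [Finset.sum_const, Finset.card_univ, nsmul_eq_mul]
        rcases (Fintype.card ι).eq_zero_or_pos with h0 | hpos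
        · simp [h0]
        · field_simp
          norm_num
    _ ≤ Real.log 2 := by linarith [Real.log_two_gt_d9]

lemma prod_sub_nonneg_of_even_card {ι : Type*} [Fintype ι] (hι : Even (Fintype.card ι))
    (x : ι → ℝ) {a : ℝ} (hside : (∀ i, x i ≤ a) ∨ (∀ i, a ≤ x i)) : 0 ≤ ∏ i, (a - x i) := by
  rcases hside with hle | hge
  · exact Finset.prod_nonneg fun i _ => sub_nonneg.mpr (hle i)
  · have : ∏ i, (a - x i) = ∏ i, (x i - a) := by
      simp_rw [← neg_sub (x _) a, Finset.prod_neg, Finset.card_univ, hι.neg_one_pow, one_mul]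
    rw [this]
    exact Finset.prod_nonneg fun i _ => sub_nonneg.mpr (hge i)

section HarmonicPart

variable (k : ℕ) (x : Fin (2 * k) → ℝ)

lemma vv_eq_neg_re_prod (a y : ℝ) :
    vv k x (a, y) = -(∏ i, (((a - x i : ℝ) : ℂ) + y * Complex.I)).re := by
  simp only [vv, FF, Complex.neg_re, Complex.ofReal_sub]
  congr 3
  ext i
  ring

lemma vv_nonpos_of_forall_le_abs_sub {a y : ℝ} (hside : (∀ i, x i ≤ a) ∨ (∀ i, a ≤ x i))
    (hfar : ∀ i, 4 * k * |y| ≤ |a - x i|) : vv k x (a, y) ≤ 0 := by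
  have hre := re_prod_add_mul_I_nonneg (fun i => a - x i) y
    (prod_sub_nonneg_of_even_card (by simp) x hside)
    (fun i => by rw [Fintype.card_fin]; push_cast; linarith [hfar i])
  rw [vv_eq_neg_re_prod]
  linarith

lemma abs_vv_le {M : ℝ} (hM : ∀ i, |x i| ≤ M) (a y : ℝ) :
    |vv k x (a, y)| ≤ (|a| + |y| + M) ^ (2 * k) := by
  calc |vv k x (a, y)| ≤ ‖FF k x (a + y * Complex.I)‖ := Complex.abs_re_le_norm _
    _ = ∏ i, ‖((a - x i : ℝ) : ℂ) + y * Complex.I‖ := by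
        simp only [FF, norm_neg, norm_prod, Complex.ofReal_sub]
        congr 1
        ext i
        ring_nf
    _ ≤ ∏ _i : Fin (2 * k), (|a| + |y| + M) := Finset.prod_le_prod (fun _ _ => norm_nonneg _)
        fun i _ => by
          refine (Complex.norm_le_abs_re_add_abs_im _).trans ?_
          simp only [Complex.add_re, Complex.ofReal_re, Complex.mul_re, Complex.ofReal_im,
            Complex.I_re, Complex.I_im, Complex.add_im, Complex.mul_im]
          norm_num
          linarith [abs_sub a (x i), hM i]
    _ = (|a| + |y| + M) ^ (2 * k) := by simp

lemma exists_vv_le (Y : ℝ) : ∃ C, ∀ a y, |y| ≤ Y → vv k x (a, y) ≤ C := by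
  set M := ∑ i, |x i|
  have hM : ∀ i, |x i| ≤ M := fun i =>
    Finset.single_le_sum (f := fun j => |x j|) (fun j _ => abs_nonneg _) (Finset.mem_univ i)
  set R := M + 4 * k * Y
  refine ⟨(R + Y + M) ^ (2 * k), fun a y hy => ?_⟩
  have hY : 0 ≤ Y := (abs_nonneg y).trans hy
  have hM0 : 0 ≤ M := Finset.sum_nonneg fun i _ => abs_nonneg _
  have hMR : M ≤ R := le_add_of_nonneg_right (by positivity)
  rcases le_or_gt |a| R with hnear | hfar
  · refine (le_abs_self _).trans ((abs_vv_le k x hM a y).trans ?_)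
    gcongr
  · refine (vv_nonpos_of_forall_le_abs_sub k x ?_ fun i => ?_).trans (by positivity)
    · rcases le_or_gt 0 a with ha | ha
      · refine Or.inl fun i => ?_
        have := (abs_le.mp (hM i)).2
        rw [abs_of_nonneg ha] at hfar
        linarith
      · refine Or.inr fun i => ?_
        have := (abs_le.mp (hM i)).1
        rw [abs_of_neg ha] at hfar
        linarith
    · have : 4 * k * |y| ≤ 4 * k * Y := by gcongr
      linarith [abs_sub_abs_le_abs_sub a (x i), hM i]

end HarmonicPart

lemma tendsto_rpow_nhdsGT_zero {p : ℝ} (hp : 0 < p) :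
    Tendsto (fun ε : ℝ => ε ^ p) (𝓝[>] 0) (𝓝 0) := by
  have := (Real.continuousAt_rpow_const 0 p (Or.inr hp.le)).tendsto
  rw [Real.zero_rpow hp.ne'] at this
  exact this.mono_left nhdsWithin_le_nhds

lemma mul_xeps_sq (k : ℕ) {ε : ℝ} (hε : 0 < ε) :
    ε * xeps k ε ^ 2 = 3 ^ ((1 : ℝ) / k) * ε ^ (1 - 3 / (2 * (k : ℝ))) := by
  have hbase : 0 ≤ 3 * ε ^ (-(3 : ℝ) / 2) := by positivity
  rw [xeps, ← Real.rpow_natCast _ 2, ← Real.rpow_mul hbase,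
    Real.mul_rpow (by norm_num) (by positivity), ← Real.rpow_mul hε.le, sub_eq_add_neg,
    Real.rpow_add hε, Real.rpow_one]
  ring_nf

lemma tendsto_mul_xeps_sq {k : ℕ} (hk : 2 ≤ k) :
    Tendsto (fun ε => ε * xeps k ε ^ 2) (𝓝[>] 0) (𝓝 0) := by
  have hp : 0 < 1 - 3 / (2 * (k : ℝ)) := by
    have : (2 : ℝ) ≤ k := by exact_mod_cast hk
    rw [sub_pos, div_lt_one (by positivity)]
    linarith
  have := (tendsto_rpow_nhdsGT_zero hp).const_mul (3 ^ ((1 : ℝ) / k))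
  rw [mul_zero] at this
  exact this.congr' (eventually_nhdsWithin_of_forall fun ε hε => (mul_xeps_sq k hε).symm)

lemma uu_lt_of_abs_eq (k : ℕ) (x : Fin (2 * k) → ℝ) {ε h a y C : ℝ} (hε : 0 < ε)
    (hh : h ≤ 1) (hy : |y| = 1 + h) (hv : vv k x (a, y) ≤ C)
    (hsmall : 8 * ε + 6 * (ε * a ^ 2) + ε ^ ((3 : ℝ) / 2) * |C| < h) :
    uu k x ε (a, y) < -(h ^ 2 / 2) := by
  have hy2 : |y| ≤ 2 := by linarith
  have hcubic : y ^ 3 - 3 * a ^ 2 * y ≤ 8 + 6 * a ^ 2 := by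
    have h1 : y ^ 3 ≤ 8 := by
      calc y ^ 3 ≤ |y| ^ 3 := by rw [← abs_pow]; exact le_abs_self _
        _ ≤ 2 ^ 3 := by gcongr
        _ = 8 := by norm_num
    have h2 : -y ≤ 2 := by linarith [neg_le_abs y]
    nlinarith [sq_nonneg a]
  have hcubic' := mul_le_mul_of_nonneg_left hcubic hε.le
  have hv' : ε ^ ((3 : ℝ) / 2) * vv k x (a, y) ≤ ε ^ ((3 : ℝ) / 2) * |C| :=
    mul_le_mul_of_nonneg_left (hv.trans (le_abs_self C)) (by positivity)
  have hsq : y ^ 2 = (1 + h) ^ 2 := by rw [← sq_abs, hy]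
  simp only [uu]
  nlinarith

theorem stmt3_general (k : ℕ) (hk : 2 ≤ k) (x : Fin (2*k) → ℝ)
    (h : ℝ) (hh : h ∈ Set.Ioo (0:ℝ) 1) :
    ∃ ε₀ > (0:ℝ), ∀ ε : ℝ, 0 < ε → ε < ε₀ →
      ∀ a ∈ Set.Icc (-(xeps k ε)) (xeps k ε),
        uu k x ε (a, 1 + h) < -(h^2/2) ∧ uu k x ε (a, -(1 + h)) < -(h^2/2) := by
  obtain ⟨C, hC⟩ := exists_vv_le k x 2
  have hlim : Tendsto (fun ε => 8 * ε + 6 * (ε * xeps k ε ^ 2) + ε ^ ((3 : ℝ) / 2) * |C|)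
      (𝓝[>] 0) (𝓝 0) := by
    simpa using (((tendsto_nhdsWithin_of_tendsto_nhds tendsto_id).const_mul 8).add
      ((tendsto_mul_xeps_sq hk).const_mul 6)).add
      ((tendsto_rpow_nhdsGT_zero (by norm_num)).mul_const |C|)
  obtain ⟨ε₀, hε₀, hsmall⟩ :=
    (nhdsGT_basis 0).eventually_iff.mp (hlim.eventually (gt_mem_nhds hh.1))
  refine ⟨ε₀, hε₀, fun ε hε hεlt a ha => ?_⟩
  have hsmall_a : 8 * ε + 6 * (ε * a ^ 2) + ε ^ ((3 : ℝ) / 2) * |C| < h := by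
    have := mul_le_mul_of_nonneg_left (sq_le_sq' ha.1 ha.2) hε.le
    linarith [hsmall ⟨hε, hεlt⟩]
  have hy : |1 + h| = 1 + h := abs_of_pos (by linarith [hh.1])
  have hy2 : |1 + h| ≤ 2 := by linarith [hh.2]
  exact ⟨uu_lt_of_abs_eq k x hε hh.2.le hy (hC _ _ hy2) hsmall_a,
    uu_lt_of_abs_eq k x hε hh.2.le (by rwa [abs_neg]) (hC _ _ (by rwa [abs_neg])) hsmall_a⟩

theorem stmt3 (k : ℕ) (hk : 2 ≤ k) (x : Fin (2*k) → ℝ) (hx : StrictMono x)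
    (h : ℝ) (hh : h ∈ Set.Ioo (0:ℝ) 1) :
    ∃ ε₀ > (0:ℝ), ∀ ε : ℝ, 0 < ε → ε < ε₀ →
      ∀ a ∈ Set.Icc (-(xeps k ε)) (xeps k ε),
        uu k x ε (a, 1 + h) < -(h^2/2) ∧ uu k x ε (a, -(1 + h)) < -(h^2/2) :=
  stmt3_general k hk x h hh
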